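/- arXiv:2405.05278 — 3 statements merged into one kernel-verified Lean document; each statement's English description precedes it below -/
import Mathlib

section
/- Unified Pythagorean theorem, spherical case: if cos(a/R) = cos(b/R)·cos(c/R) and we define disc areas 𝒜(r) = 2πR²(1 - cos(r/R)), then 𝒜(a) = 𝒜(b) + 𝒜(c) - (K/2π)·𝒜(b)·𝒜(c), where K = 1/R². -/
open Real

/-- Unified Pythagorean theorem, spherical case. -/
theorem unified_pythagoras_spherical (R a b c : ℝ) (hR : 0 < R)
    (h : Real.cos (a / R) = Real.cos (b / R) * Real.cos (c / R))
    (𝒜 : ℝ → ℝ) (h𝒜 : ∀ r, 𝒜 r = 2 * π * R ^ 2 * (1 - Real.cos (r / R)))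
    (K : ℝ) (hK : K = 1 / R ^ 2) :
    𝒜 a = 𝒜 b + 𝒜 c - K / (2 * π) * (𝒜 b * 𝒜 c) := by
  have hπ := Real.pi_pos.ne'
  rw [h𝒜, h𝒜, h𝒜, h, hK]
  have hR2 : R ^ 2 ≠ 0 := by positivity
  field_simp
  ring
end

section
/- Unified Pythagorean theorem, hyperbolic case: if cosh(a/R) = cosh(b/R)·cosh(c/R) and 𝒜(r) = 2πR²(cosh(r/R) - 1), then 𝒜(a) = 𝒜(b) + 𝒜(c) - (K/2π)·𝒜(b)·𝒜(c), where K = -1/R². -/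
open Real

/-- Unified Pythagorean theorem, hyperbolic case. -/
theorem unified_pythagoras_hyperbolic (R a b c : ℝ) (hR : 0 < R)
    (h : Real.cosh (a / R) = Real.cosh (b / R) * Real.cosh (c / R))
    (𝒜 : ℝ → ℝ) (h𝒜 : ∀ r, 𝒜 r = 2 * π * R ^ 2 * (Real.cosh (r / R) - 1))
    (K : ℝ) (hK : K = -(1 / R ^ 2)) :
    𝒜 a = 𝒜 b + 𝒜 c - K / (2 * π) * (𝒜 b * 𝒜 c) := by
  have hπ : π ≠ 0 := Real.pi_ne_zero
  have hR2 : R ^ 2 ≠ 0 := pow_ne_zero _ hR.ne'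
  rw [h𝒜, h𝒜, h𝒜, h, hK]
  field_simp
  ring
end

section
/- Cross product orthogonality lemma for De Gua: for u = (p,0,0), v = (0,q,0), w = (0,0,r) in ℝ³, one has ‖(v - u) × (w - u)‖² = ‖u × v‖² + ‖u × w‖² + ‖v × w‖². -/
open Matrix

/-- Cross product orthogonality lemma for De Gua's theorem:
`‖(v-u) × (w-u)‖² = ‖u × v‖² + ‖u × w‖² + ‖v × w‖²` for
`u = (p,0,0)`, `v = (0,q,0)`, `w = (0,0,r)` (squared Euclidean norms). -/
theorem de_gua_cross_lemma (p q r : ℝ)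
    (u v w : Fin 3 → ℝ)
    (hu : u = ![p, 0, 0]) (hv : v = ![0, q, 0]) (hw : w = ![0, 0, r]) :
    (∑ i, (crossProduct (v - u) (w - u)) i ^ 2)
      = (∑ i, (crossProduct u v) i ^ 2) + (∑ i, (crossProduct u w) i ^ 2)
        + (∑ i, (crossProduct v w) i ^ 2) := by
  subst hu hv hw
  simp [crossProduct, Fin.sum_univ_three]
  ring
end
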